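/- Let (V, l_∗, r_∗) be a representation of an anti-Zinbiel algebra (A, ∗). Then (V*, l_∗* + r_∗*, -r_∗*) is also a representation of (A, ∗), where for a linear map f: A → End(V), f*: A → End(V*) is defined by ⟨f*(x)u*, v⟩ = -⟨u*, f(x)v⟩. -/

import Mathlib

/-- A representation `(V, l, r)` of an anti-Zinbiel algebra `(A, ∗)` (multiplication in
`Module.End` is composition; `l⋆ = l + r`). -/
def IsAZRep {k A V : Type*} [Field k] [AddCommGroup A] [Module k A]
    [AddCommGroup V] [Module k V]
    (s : A →ₗ[k] A →ₗ[k] A) (l r : A → Module.End k V) : Prop :=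
  IsLinearMap k l ∧ IsLinearMap k r ∧
  (∀ x y, l x * l y = - l (s x y + s y x)) ∧
  (∀ x y, l x * l y = - (r x * (l y + r y))) ∧
  (∀ x y, l x * l y = r (s y x)) ∧
  (∀ x y, l x * r y = - (r y * (l x + r x))) ∧
  (∀ x y, l x * r y = - (r x * (l y + r y))) ∧
  (∀ x y, l x * r y = l y * r x) ∧
  (∀ x y, r (s x y) = l x * r y) ∧
  (∀ x y, l y * l x = l x * l y)

/-! Transposition `f ↦ f.dualMap` is a linear anti-homomorphism `End V → End V*`, so each axiom
of the dual representation is the transpose of an identity in `End V` with the order of products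
reversed. Writing `l⋆ = l + r`, these identities follow from `l(x)l(y) = l(x)r(y)` (obtained by
chaining the axioms `l(x)l(y) = l(y)l(x) = r(x∗y) = l(x)r(y)`) and `r(y)l⋆(x) = -l(x)r(y)`; the key
one is `l⋆(y)l⋆(x) = l(y)l(x)`. -/

namespace IsAZRep

variable {k A V : Type*} [Field k] [AddCommGroup A] [Module k A] [AddCommGroup V] [Module k V]
  {s : A →ₗ[k] A →ₗ[k] A} {l r : A → Module.End k V}

theorem left_mul_left_eq_left_mul_right (h : IsAZRep s l r) (x y : A) :
    l x * l y = l x * r y := by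
  obtain ⟨-, -, -, -, h3, -, -, -, h7, h8⟩ := h
  rw [h8, h3, h7]

theorem right_mul_lstar (h : IsAZRep s l r) (x y : A) :
    r y * (l x + r x) = -(l x * r y) := by
  obtain ⟨-, -, -, -, -, h4, -⟩ := h
  rw [h4, neg_neg]

theorem lstar_mul_lstar (h : IsAZRep s l r) (x y : A) :
    (l y + r y) * (l x + r x) = l y * l x := by
  have ⟨_, _, _, _, _, _, _, h6, _⟩ := h
  linear_combination (norm := noncomm_ring) h.right_mul_lstar x y - h6 x y

theorem lstar_anticomm (h : IsAZRep s l r) (x y : A) :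
    l (s x y + s y x) + r (s x y + s y x) = l y * l x := by
  have ⟨_, hr, h1, _, _, _, _, _, h7, _⟩ := h
  rw [hr.map_add, h7, h7, ← h.left_mul_left_eq_left_mul_right,
    ← h.left_mul_left_eq_left_mul_right]
  linear_combination (norm := noncomm_ring) h1 x y

theorem transpose {W : Type*} [AddCommGroup W] [Module k W] (h : IsAZRep s l r)
    (T : Module.End k V →ₗ[k] Module.End k W) (hT : ∀ f g, T (f * g) = T g * T f) :
    IsAZRep s (fun x => -T (l x) - T (r x)) (fun x => T (r x)) := by
  have ⟨hl, hr, _, _, h3, _, _, h6, h7, h8⟩ := h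
  refine ⟨(-(T ∘ₗ hl.mk' l) - T ∘ₗ hr.mk' r).isLinear, (T ∘ₗ hr.mk' r).isLinear,
    fun x y => ?_, fun x y => ?_, fun x y => ?_, fun x y => ?_, fun x y => ?_, fun x y => ?_,
    fun x y => ?_, fun x y => ?_⟩
  all_goals simp only [← map_neg, ← map_sub, ← map_add, ← hT]; refine congrArg T ?_
  · linear_combination (norm := noncomm_ring) h.lstar_mul_lstar x y - h.lstar_anticomm x y
  · linear_combination (norm := noncomm_ring)
      h.lstar_mul_lstar x y + h.left_mul_left_eq_left_mul_right y x
  · linear_combination (norm := noncomm_ring) h.lstar_mul_lstar x y + h8 x y + h3 x y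
  · linear_combination (norm := noncomm_ring) -h.right_mul_lstar x y
  · linear_combination (norm := noncomm_ring) -h.right_mul_lstar x y + h6 x y
  · linear_combination (norm := noncomm_ring)
      h.right_mul_lstar y x - h.right_mul_lstar x y + h6 x y
  · linear_combination (norm := noncomm_ring) h7 x y + h.right_mul_lstar x y
  · linear_combination (norm := noncomm_ring)
      h.lstar_mul_lstar y x - h.lstar_mul_lstar x y - h8 x y

end IsAZRep

/-- With `f*(x) = -(f x).dualMap`, the two maps are `l* + r*` and `-r*`. -/
theorem azRep_dual {k A V : Type*} [Field k] [AddCommGroup A] [Module k A]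
    [AddCommGroup V] [Module k V]
    (s : A →ₗ[k] A →ₗ[k] A) (l r : A → Module.End k V)
    (h : IsAZRep s l r) :
    IsAZRep (V := Module.Dual k V) s
      (fun x => -((l x).dualMap) - (r x).dualMap)
      (fun x => (r x).dualMap) :=
  h.transpose Module.Dual.transpose fun _ _ => rfl
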